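/- arXiv:2312.09331 — 5 statements merged into one kernel-verified Lean document; each statement's English description precedes it below -/
import Mathlib

section
/- Let $Q$ be a full conjunctive query with atoms $R_1(\bm X_1),\ldots,R_k(\bm X_k)$ and let $(\lambda_i)_{i\in[k]}$ be a fractional edge cover of $Q$, i.e., nonnegative reals such that for every variable $X$ of $Q$, the sum of $\lambda_i$ over all atoms containing $X$ is at least $1$. For a single variable $Y$ of $Q$ and a value $y$, let $R_i \ltimes y$ denote $R_i$ if $Y \notin \bm X_i$ and $\sigma_{Y=y} R_i$ otherwise. Then $\sum_{y} \prod_{i\in[k]} |R_i \ltimes y|^{\lambda_i} \le \prod_{i\in[k]} |R_i|^{\lambda_i}$, where the sum ranges over the active domain of $Y$. -/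
/-!
With `L = ∑ λᵢ ≥ 1` over the atoms containing `Y`, write `∏ aᵢ^λᵢ = (∏ aᵢ^(λᵢ/L))^L`.
Since `L ≥ 1`, `∑_y b_y^L ≤ (∑_y b_y)^L`, and the weights `λᵢ/L` sum to `1`, so Hölder's
inequality for the counting measure bounds `∑_y ∏ aᵢ^(λᵢ/L)` by `∏ (∑_y aᵢ)^(λᵢ/L)`.
The atoms not containing `Y` contribute the constant factor `|Rᵢ|^λᵢ`, and for the others
`∑_y |Rᵢ ⋉ y| = |Rᵢ|` by counting `Rᵢ` fibrewise over the `Y`-value.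
-/

open Finset MeasureTheory

namespace Real

theorem sum_rpow_le_rpow_sum {ι : Type*} (s : Finset ι) {f : ι → ℝ} (hf : ∀ i ∈ s, 0 ≤ f i)
    {p : ℝ} (hp : 1 ≤ p) : ∑ i ∈ s, f i ^ p ≤ (∑ i ∈ s, f i) ^ p := by
  have hsum : 0 ≤ ∑ i ∈ s, f i := sum_nonneg hf
  calc ∑ i ∈ s, f i ^ p ≤ ∑ i ∈ s, f i * (∑ j ∈ s, f j) ^ (p - 1) := by
        refine sum_le_sum fun i hi => ?_
        calc f i ^ p = f i * f i ^ (p - 1) := by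
              rw [← rpow_one_add' (hf i hi) (by linarith), add_sub_cancel]
          _ ≤ f i * (∑ j ∈ s, f j) ^ (p - 1) := mul_le_mul_of_nonneg_left
              (rpow_le_rpow (hf i hi) (single_le_sum hf hi) (by linarith)) (hf i hi)
    _ = (∑ i ∈ s, f i) ^ p := by
        rw [← sum_mul, ← rpow_one_add' hsum (by linarith), add_sub_cancel]

theorem sum_prod_rpow_le_prod_sum_rpow_of_sum_eq_one {ι V : Type*} [Fintype V] (s : Finset ι)
    {f : ι → V → ℝ} (hf : ∀ i ∈ s, ∀ y, 0 ≤ f i y) {p : ι → ℝ} (hp : ∑ i ∈ s, p i = 1)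
    (h2p : ∀ i ∈ s, 0 ≤ p i) :
    ∑ y, ∏ i ∈ s, f i y ^ p i ≤ ∏ i ∈ s, (∑ y, f i y) ^ p i := by
  let _ : MeasurableSpace V := ⊤
  have holder := ENNReal.lintegral_prod_norm_pow_le (μ := Measure.count) s
    (f := fun i y => ENNReal.ofReal (f i y)) (fun i _ => measurable_from_top.aemeasurable) hp h2p
  simp only [lintegral_count, tsum_fintype] at holder
  rw [← ENNReal.ofReal_le_ofReal_iff
    (prod_nonneg fun i hi => rpow_nonneg (sum_nonneg fun y _ => hf i hi y) _)]
  convert holder using 1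
  · rw [ENNReal.ofReal_sum_of_nonneg fun y _ => prod_nonneg fun i hi => rpow_nonneg (hf i hi y) _]
    refine sum_congr rfl fun y _ => ?_
    rw [ENNReal.ofReal_prod_of_nonneg fun i hi => rpow_nonneg (hf i hi y) _]
    exact prod_congr rfl fun i hi => (ENNReal.ofReal_rpow_of_nonneg (hf i hi y) (h2p i hi)).symm
  · rw [ENNReal.ofReal_prod_of_nonneg fun i hi => rpow_nonneg (sum_nonneg fun y _ => hf i hi y) _]
    refine prod_congr rfl fun i hi => ?_
    rw [← ENNReal.ofReal_rpow_of_nonneg (sum_nonneg fun y _ => hf i hi y) (h2p i hi),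
      ENNReal.ofReal_sum_of_nonneg fun y _ => hf i hi y]

theorem sum_prod_rpow_le_prod_sum_rpow {ι V : Type*} [Fintype V] (s : Finset ι)
    {f : ι → V → ℝ} (hf : ∀ i ∈ s, ∀ y, 0 ≤ f i y) {p : ι → ℝ} (hp : 1 ≤ ∑ i ∈ s, p i)
    (h2p : ∀ i ∈ s, 0 ≤ p i) :
    ∑ y, ∏ i ∈ s, f i y ^ p i ≤ ∏ i ∈ s, (∑ y, f i y) ^ p i := by
  set L := ∑ i ∈ s, p i
  have hL : 0 < L := one_pos.trans_le hp
  have hq : ∑ i ∈ s, p i / L = 1 := by rw [← sum_div, div_self hL.ne']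
  have h2q : ∀ i ∈ s, 0 ≤ p i / L := fun i hi => div_nonneg (h2p i hi) hL.le
  have hscale : ∀ g : ι → ℝ, (∀ i ∈ s, 0 ≤ g i) →
      (∏ i ∈ s, g i ^ (p i / L)) ^ L = ∏ i ∈ s, g i ^ p i := fun g hg => by
    rw [← finsetProd_rpow s _ (fun i hi => rpow_nonneg (hg i hi) _)]
    refine prod_congr rfl fun i hi => ?_
    rw [← rpow_mul (hg i hi), div_mul_cancel₀ _ hL.ne']
  calc ∑ y, ∏ i ∈ s, f i y ^ p i = ∑ y, (∏ i ∈ s, f i y ^ (p i / L)) ^ L :=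
        sum_congr rfl fun y _ => (hscale _ fun i hi => hf i hi y).symm
    _ ≤ (∑ y, ∏ i ∈ s, f i y ^ (p i / L)) ^ L :=
        sum_rpow_le_rpow_sum _ (fun y _ => prod_nonneg fun i hi => rpow_nonneg (hf i hi y) _) hp
    _ ≤ (∏ i ∈ s, (∑ y, f i y) ^ (p i / L)) ^ L :=
        rpow_le_rpow (sum_nonneg fun y _ => prod_nonneg fun i hi => rpow_nonneg (hf i hi y) _)
          (sum_prod_rpow_le_prod_sum_rpow_of_sum_eq_one s hf hq h2q) hL.le
    _ = ∏ i ∈ s, (∑ y, f i y) ^ p i := hscale _ fun i hi => sum_nonneg fun y _ => hf i hi y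

end Real

open Real in
theorem sum_prod_rpow_le_prod_rpow_of_marginals {ι V : Type*} [Fintype ι] [DecidableEq ι]
    [Fintype V] (s : Finset ι) {f : ι → V → ℝ} {c p : ι → ℝ} (hf : ∀ i y, 0 ≤ f i y)
    (hc : ∀ i, 0 ≤ c i) (hp : ∀ i ∈ s, 0 ≤ p i) (hcover : 1 ≤ ∑ i ∈ s, p i)
    (hsum : ∀ i ∈ s, ∑ y, f i y = c i) (hconst : ∀ i ∉ s, ∀ y, f i y = c i) :
    ∑ y, ∏ i, f i y ^ p i ≤ ∏ i, c i ^ p i := by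
  calc ∑ y, ∏ i, f i y ^ p i = (∑ y, ∏ i ∈ s, f i y ^ p i) * ∏ i ∈ sᶜ, c i ^ p i := by
        rw [sum_mul]
        refine sum_congr rfl fun y _ => ?_
        rw [← prod_mul_prod_compl s]
        congr 1
        exact prod_congr rfl fun i hi => by rw [hconst i (mem_compl.1 hi) y]
    _ ≤ (∏ i ∈ s, c i ^ p i) * ∏ i ∈ sᶜ, c i ^ p i := by
        refine mul_le_mul_of_nonneg_right ?_ (prod_nonneg fun i _ => rpow_nonneg (hc i) _)
        calc ∑ y, ∏ i ∈ s, f i y ^ p i ≤ ∏ i ∈ s, (∑ y, f i y) ^ p i :=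
              sum_prod_rpow_le_prod_sum_rpow s (fun i _ => hf i) hcover hp
          _ = ∏ i ∈ s, c i ^ p i := prod_congr rfl fun i hi => by rw [hsum i hi]
    _ = ∏ i, c i ^ p i := prod_mul_prod_compl s _

theorem stmt_0_general {k : ℕ} {V : Type*} [Fintype V] [DecidableEq V]
    (T : Fin k → Type*)
    (R : (i : Fin k) → Finset (T i))
    (hasY : Fin k → Prop) [DecidablePred hasY]
    (proj : (i : Fin k) → hasY i → T i → V)
    (lam : Fin k → ℝ) (hlam : ∀ i, 0 ≤ lam i)
    (hcover : 1 ≤ ∑ i ∈ Finset.univ.filter (fun i => hasY i), lam i) :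
    ∑ y : V, ∏ i : Fin k,
      (((if h : hasY i then ((R i).filter (fun t => proj i h t = y)).card
         else (R i).card) : ℝ) ^ lam i)
    ≤ ∏ i : Fin k, ((R i).card : ℝ) ^ lam i := by
  refine sum_prod_rpow_le_prod_rpow_of_marginals _ (fun i y => ?_) (fun i => Nat.cast_nonneg _)
    (fun i _ => hlam i) hcover (fun i hi => ?_) (fun i hi y => ?_)
  · split_ifs <;> exact Nat.cast_nonneg _
  · simp only [dif_pos (mem_filter.1 hi).2]
    exact_mod_cast (card_eq_sum_card_fiberwise fun t _ => mem_univ (proj i _ t)).symm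
  · rw [dif_neg fun h => hi (mem_filter.2 ⟨mem_univ i, h⟩)]

/-- **Query decomposition lemma, single-variable case (Hölder step).**
A query has `k` atoms; atom `i` has tuple type `T i` and relation `R i`.
`hasY i` says variable `Y` occurs in atom `i`, in which case `proj i`
extracts the `Y`-value of a tuple. The semijoin `R i ⋉ y` is `R i` itself
when `Y` does not occur in atom `i`, and the selection `σ_{Y=y} (R i)`
otherwise. Given a fractional edge cover restricted to the variable `Y`
(the weights of the atoms containing `Y` sum to at least 1),
the sum over all values `y` of the products of the semijoin cardinalities
raised to the weights is at most the product of the full cardinalities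
raised to the weights. -/
theorem stmt_0 {k : ℕ} {V : Type*} [Fintype V] [DecidableEq V]
    (T : Fin k → Type*) [∀ i, DecidableEq (T i)]
    (R : (i : Fin k) → Finset (T i))
    (hasY : Fin k → Prop) [DecidablePred hasY]
    (proj : (i : Fin k) → hasY i → T i → V)
    (lam : Fin k → ℝ) (hlam : ∀ i, 0 ≤ lam i)
    (hcover : 1 ≤ ∑ i ∈ Finset.univ.filter (fun i => hasY i), lam i) :
    ∑ y : V, ∏ i : Fin k,
      (((if h : hasY i then ((R i).filter (fun t => proj i h t = y)).card
         else (R i).card) : ℝ) ^ lam i)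
    ≤ ∏ i : Fin k, ((R i).card : ℝ) ^ lam i :=
  stmt_0_general T R hasY proj lam hlam hcover
end

section
/- Let $R \subseteq A \times B$, $S \subseteq B \times C$, $T \subseteq A \times C$ be finite binary relations over finite types. Then $\sum_{(a,b)\in R} \sqrt{|\{c : (b,c)\in S\}| \cdot |\{c : (a,c)\in T\}|} \le \sqrt{|R|\cdot|S|\cdot|T|}$. -/
/-!
Write `d_S(b)` and `d_T(a)` for the out-degrees of `b` in `S` and of `a` in `T`.
Cauchy–Schwarz against the constant function `1` bounds the left-hand side by
`√|R| · √(∑_{(a,b)∈R} d_S(b) d_T(a))`. The remaining sum only grows when `R` is enlarged to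
the product of its two projections, where it factors as `(∑_b d_S(b)) (∑_a d_T(a)) ≤ |S| |T|`.
-/

open Finset

namespace Finset

lemma sum_card_fiber_le {ι κ : Type*} [DecidableEq κ] (s : Finset ι) (t : Finset κ)
    (g : ι → κ) : ∑ j ∈ t, #{i ∈ s | g i = j} ≤ #s :=
  (sum_card_fiberwise_eq_card_filter s t g).trans_le (card_filter_le _ _)

lemma sum_mul_le_sum_image_fst_mul_sum_image_snd {α β M : Type*} [DecidableEq α]
    [DecidableEq β] [CommSemiring M] [PartialOrder M] [IsOrderedRing M]
    (R : Finset (α × β)) (f : α → M) (g : β → M) (hf : ∀ a, 0 ≤ f a) (hg : ∀ b, 0 ≤ g b) :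
    ∑ p ∈ R, f p.1 * g p.2 ≤ (∑ a ∈ R.image Prod.fst, f a) * ∑ b ∈ R.image Prod.snd, g b := by
  have hR : R ⊆ R.image Prod.fst ×ˢ R.image Prod.snd := fun p hp =>
    mem_product.2 ⟨mem_image_of_mem _ hp, mem_image_of_mem _ hp⟩
  calc ∑ p ∈ R, f p.1 * g p.2
      ≤ ∑ p ∈ R.image Prod.fst ×ˢ R.image Prod.snd, f p.1 * g p.2 :=
        sum_le_sum_of_subset_of_nonneg hR fun p _ _ => mul_nonneg (hf _) (hg _)
    _ = _ := by rw [sum_product, sum_mul_sum]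

end Finset

lemma sum_card_fiber_mul_card_fiber_le {A B C : Type*} [DecidableEq A] [DecidableEq B]
    (R : Finset (A × B)) (S : Finset (B × C)) (T : Finset (A × C)) :
    ∑ p ∈ R, #{q ∈ S | q.1 = p.2} * #{q ∈ T | q.1 = p.1} ≤ #S * #T := by
  calc ∑ p ∈ R, #{q ∈ S | q.1 = p.2} * #{q ∈ T | q.1 = p.1}
      = ∑ p ∈ R, #{q ∈ T | q.1 = p.1} * #{q ∈ S | q.1 = p.2} :=
        sum_congr rfl fun _ _ => mul_comm _ _
    _ ≤ (∑ a ∈ R.image Prod.fst, #{q ∈ T | q.1 = a}) *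
          ∑ b ∈ R.image Prod.snd, #{q ∈ S | q.1 = b} :=
        sum_mul_le_sum_image_fst_mul_sum_image_snd R (fun a => #{q ∈ T | q.1 = a})
          (fun b => #{q ∈ S | q.1 = b}) (fun _ => Nat.zero_le _) fun _ => Nat.zero_le _
    _ ≤ #T * #S := Nat.mul_le_mul (sum_card_fiber_le T _ _) (sum_card_fiber_le S _ _)
    _ = #S * #T := mul_comm _ _

theorem stmt_1_general {A B C : Type*}
    [DecidableEq A] [DecidableEq B]
    (R : Finset (A × B)) (S : Finset (B × C)) (T : Finset (A × C)) :
    ∑ p ∈ R, Real.sqrt (((S.filter (fun q => q.1 = p.2)).card : ℝ) *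
                        ((T.filter (fun q => q.1 = p.1)).card : ℝ))
    ≤ Real.sqrt ((R.card : ℝ) * (S.card : ℝ) * (T.card : ℝ)) := by
  have hdeg : ∑ p ∈ R, (#{q ∈ S | q.1 = p.2} * #{q ∈ T | q.1 = p.1} : ℝ) ≤ #S * #T := by
    exact_mod_cast sum_card_fiber_mul_card_fiber_le R S T
  calc ∑ p ∈ R, √((#{q ∈ S | q.1 = p.2} : ℝ) * #{q ∈ T | q.1 = p.1})
      = ∑ p ∈ R, √1 * √((#{q ∈ S | q.1 = p.2} : ℝ) * #{q ∈ T | q.1 = p.1}) := by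
        simp only [Real.sqrt_one, one_mul]
    _ ≤ √(∑ _p ∈ R, (1 : ℝ)) * √(∑ p ∈ R, (#{q ∈ S | q.1 = p.2} * #{q ∈ T | q.1 = p.1} : ℝ)) :=
        Real.sum_sqrt_mul_sqrt_le R (fun _ => zero_le_one) fun _ => by positivity
    _ ≤ √(#R : ℝ) * √((#S : ℝ) * #T) := by
        rw [sum_const, nsmul_one]
        gcongr
    _ = √((#R : ℝ) * #S * #T) := by rw [← Real.sqrt_mul (Nat.cast_nonneg _), mul_assoc]

/-- **Query decomposition lemma for the triangle query** with fractional edge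
cover `(1/2, 1/2, 1/2)`: for finite binary relations `R ⊆ A × B`, `S ⊆ B × C`,
`T ⊆ A × C`,
`∑_{(a,b)∈R} √(|{c : (b,c)∈S}| ⋅ |{c : (a,c)∈T}|) ≤ √(|R|⋅|S|⋅|T|)`. -/
theorem stmt_1 {A B C : Type*} [Fintype A] [Fintype B] [Fintype C]
    [DecidableEq A] [DecidableEq B] [DecidableEq C]
    (R : Finset (A × B)) (S : Finset (B × C)) (T : Finset (A × C)) :
    ∑ p ∈ R, Real.sqrt (((S.filter (fun q => q.1 = p.2)).card : ℝ) *
                        ((T.filter (fun q => q.1 = p.1)).card : ℝ))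
    ≤ Real.sqrt ((R.card : ℝ) * (S.card : ℝ) * (T.card : ℝ)) :=
  stmt_1_general R S T
end

section
/- Let $N = 2^n$ and let $[\alpha,\beta] \subseteq [N]$ be a discrete interval with $\alpha \le \beta$. If the canonical partition $\mathrm{CP}_N([\alpha,\beta])$ contains a singleton interval $[x,x]$, then $x = \alpha$ or $x = \beta$. -/
/-- The numeric value of a bitstring (most significant bit first). -/
def bitsVal (b : List Bool) : ℕ :=
  b.foldl (fun acc x => 2 * acc + (if x then 1 else 0)) 0

/-- The node of the segment tree `𝒯_N` (`N = 2^n`) identified by the bitstring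
`b` (root = empty string, children of `b` are `b0` and `b1`): the aligned
dyadic subinterval of `[1, 2^n]` of length `2^(n - |b|)` with index `bitsVal b`. -/
def seg (n : ℕ) (b : List Bool) : Finset ℕ :=
  Finset.Icc (bitsVal b * 2 ^ (n - b.length) + 1)
             ((bitsVal b + 1) * 2 ^ (n - b.length))

/-- The canonical partition `CP_N([α,β])` (`N = 2^n`) of the discrete interval
`[α,β] ⊆ [N]`: the set of maximal segment-tree nodes contained in `[α,β]`,
i.e. nodes `b` with `seg n b ⊆ [α,β]` such that either `b` is the root or the
parent of `b` (obtained by dropping the last bit) is not contained in `[α,β]`. -/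
def CP (n α β : ℕ) : Set (List Bool) :=
  {b | b.length ≤ n ∧ seg n b ⊆ Finset.Icc α β ∧
       (b = [] ∨ ¬ seg n b.dropLast ⊆ Finset.Icc α β)}

/-! A node whose segment is a singleton is a leaf. If the leaf is the root then `N = 1` and
`x = 1 ≤ α`. Otherwise its parent is `{x, x ± 1}`; maximality says the parent is not inside
`[α, β]`, so the sibling `x ± 1` lies outside while `x` lies inside, and `x` is an endpoint. -/

lemma bitsVal_concat (l : List Bool) (c : Bool) :
    bitsVal (l ++ [c]) = 2 * bitsVal l + (if c then 1 else 0) := by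
  simp [bitsVal]

lemma seg_eq_singleton_iff (n x : ℕ) (b : List Bool) :
    seg n b = {x} ↔ n ≤ b.length ∧ x = bitsVal b + 1 := by
  rw [seg, Finset.Icc_eq_singleton_iff]
  have hpos : 0 < 2 ^ (n - b.length) := Nat.two_pow_pos _
  constructor
  · rintro ⟨hlo, hhi⟩
    have hpow : 2 ^ (n - b.length) = 1 := by nlinarith
    have hle : n - b.length = 0 := (Nat.pow_eq_one.1 hpow).resolve_left (by norm_num)
    exact ⟨by omega, by rw [← hlo, hpow, mul_one]⟩
  · rintro ⟨hn, rfl⟩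
    simp [Nat.sub_eq_zero_of_le hn]

lemma seg_of_length_add_one {n : ℕ} {l : List Bool} (hl : l.length + 1 = n) :
    seg n l = Finset.Icc (2 * bitsVal l + 1) (2 * bitsVal l + 2) := by
  rw [seg, ← hl, Nat.add_sub_cancel_left, pow_one]
  congr 1 <;> ring

theorem stmt_6_general (n α β x : ℕ) (hα : 1 ≤ α)
    (b : List Bool) (hb : b ∈ CP n α β) (hx : seg n b = {x}) :
    x = α ∨ x = β := by
  obtain ⟨hlen, hsub, hroot⟩ := hb
  have hxmem : x ∈ Finset.Icc α β := hsub (by simp [hx])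
  obtain ⟨hn, rfl⟩ := (seg_eq_singleton_iff n x b).1 hx
  rw [Finset.mem_Icc] at hxmem
  rcases hroot with rfl | hparent
  · simp only [bitsVal, List.foldl_nil] at hxmem ⊢
    omega
  · obtain ⟨l, c, rfl⟩ := List.eq_nil_or_concat' b |>.resolve_left
      (by rintro rfl; exact hparent hsub)
    have hl : l.length + 1 = n := by
      simp only [List.length_append, List.length_singleton] at hlen hn; omega
    rw [List.dropLast_concat, seg_of_length_add_one hl, Finset.not_subset] at hparent
    obtain ⟨y, hy, hyout⟩ := hparent
    simp only [Finset.mem_Icc] at hy hyout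
    cases c <;> simp only [bitsVal_concat, Bool.false_eq_true, ↓reduceIte] at hxmem ⊢ <;> omega

/-- **Singletons in a canonical partition are endpoints**: if the canonical
partition `CP_N([α,β])` (for `[α,β] ⊆ [1, 2^n]`, `α ≤ β`) contains a node whose
segment is a singleton interval `[x,x]`, then `x = α` or `x = β`. -/
theorem stmt_6 (n α β x : ℕ) (hα : 1 ≤ α) (hαβ : α ≤ β) (hβ : β ≤ 2 ^ n)
    (b : List Bool) (hb : b ∈ CP n α β) (hx : seg n b = {x}) :
    x = α ∨ x = β :=
  stmt_6_general n α β x hα b hb hx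
end

section
/- Let $N = 2^n$ and let $x_1,\ldots,x_k \subseteq [N]$ be discrete intervals. Then $\bigcap_{i\in[k]} x_i \neq \emptyset$ if and only if there exist a permutation $\sigma$ of $[k]$ and bitstrings $b_1,\ldots,b_k$ such that for every $j \in [k]$, the concatenation $b_1 \circ \cdots \circ b_j$ (viewed as a node of the segment tree $\mathcal{T}_N$) belongs to the canonical partition $\mathrm{CP}_N(x_{\sigma_j})$. -/
/-- The concatenation `b (σ 1) ∘ ⋯ ∘ b (σ j)` of the first `j+1` bitstrings
(in index order of `Fin k`). -/
def concatTo {k : ℕ} (b : Fin k → List Bool) (j : Fin k) : List Bool :=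
  (((List.finRange k).take (j.1 + 1)).map b).flatten

lemma bitsVal_append_singleton (l : List Bool) (x : Bool) :
    bitsVal (l ++ [x]) = 2 * bitsVal l + if x then 1 else 0 := by
  simp [bitsVal]

lemma bitsVal_append (p s : List Bool) :
    bitsVal (p ++ s) = bitsVal p * 2 ^ s.length + bitsVal s := by
  induction s using List.reverseRecOn with
  | nil => simp [bitsVal]
  | append_singleton s x ih =>
    rw [← List.append_assoc, bitsVal_append_singleton, ih, bitsVal_append_singleton,
      List.length_append, List.length_singleton, pow_succ]
    ring

lemma bitsVal_lt (b : List Bool) : bitsVal b < 2 ^ b.length := by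
  induction b using List.reverseRecOn with
  | nil => simp [bitsVal]
  | append_singleton l x ih =>
    rw [bitsVal_append_singleton, List.length_append, List.length_singleton, pow_succ]
    split <;> omega

lemma exists_bitsVal_eq (d m : ℕ) (hm : m < 2 ^ d) : ∃ b, b.length = d ∧ bitsVal b = m := by
  induction d generalizing m with
  | zero => exact ⟨[], rfl, by simp_all [bitsVal]⟩
  | succ d ih =>
    obtain ⟨b, hlen, hval⟩ := ih (m / 2) (by rw [pow_succ] at hm; omega)
    refine ⟨b ++ [decide (m % 2 = 1)], by simp [hlen], ?_⟩
    rw [bitsVal_append_singleton, hval]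
    split <;> simp_all <;> omega

lemma bitsVal_append_div (p s : List Bool) : bitsVal (p ++ s) / 2 ^ s.length = bitsVal p := by
  rw [bitsVal_append, mul_comm, Nat.mul_add_div (by positivity),
    Nat.div_eq_of_lt (bitsVal_lt s), add_zero]

lemma mem_seg_iff {n t : ℕ} {b : List Bool} :
    t ∈ seg n b ↔ 1 ≤ t ∧ (t - 1) / 2 ^ (n - b.length) = bitsVal b := by
  rw [seg, Finset.mem_Icc, Nat.div_eq_iff (by positivity), add_one_mul]
  generalize bitsVal b * 2 ^ (n - b.length) = x
  have : 0 < 2 ^ (n - b.length) := by positivity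
  omega

lemma seg_nonempty (n : ℕ) (b : List Bool) : (seg n b).Nonempty :=
  ⟨bitsVal b * 2 ^ (n - b.length) + 1,
    mem_seg_iff.2 ⟨le_add_self, by simp [Nat.mul_div_cancel _ (by positivity : 0 < 2 ^ _)]⟩⟩

lemma seg_of_length_eq {n : ℕ} {b : List Bool} (hb : b.length = n) :
    seg n b = {bitsVal b + 1} := by
  ext t
  rw [mem_seg_iff, hb, Nat.sub_self, pow_zero, Nat.div_one, Finset.mem_singleton]
  omega

lemma seg_subset_of_prefix {n : ℕ} {p q : List Bool} (hpq : p <+: q) (hq : q.length ≤ n) :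
    seg n q ⊆ seg n p := by
  obtain ⟨s, rfl⟩ := hpq
  intro t ht
  obtain ⟨ht1, hdiv⟩ := mem_seg_iff.1 ht
  refine mem_seg_iff.2 ⟨ht1, ?_⟩
  rw [List.length_append] at hq hdiv
  have hpow : n - p.length = (n - (p.length + s.length)) + s.length := by omega
  rw [hpow, pow_add, ← Nat.div_div_eq_div_mul, hdiv, bitsVal_append_div]

lemma exists_take_mem_CP {n α β : ℕ} {l : List Bool} (hl : l.length ≤ n)
    (h : seg n l ⊆ Finset.Icc α β) : ∃ j, l.take j ∈ CP n α β := by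
  classical
  have hex : ∃ j, seg n (l.take j) ⊆ Finset.Icc α β :=
    ⟨l.length, by rwa [List.take_length]⟩
  have hle : Nat.find hex ≤ l.length := Nat.find_min' hex (by rwa [List.take_length])
  refine ⟨Nat.find hex, (List.length_take_le' _ _).trans hl, Nat.find_spec hex, ?_⟩
  rcases Nat.eq_zero_or_pos (Nat.find hex) with h0 | hpos
  · exact Or.inl (by rw [h0, List.take_zero])
  · right
    have hparent : (l.take (Nat.find hex)).dropLast = l.take (Nat.find hex - 1) := by
      rw [List.dropLast_eq_take, List.take_take, List.length_take]
      congr 1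
      omega
    rw [hparent]
    exact Nat.find_min hex (by omega)

lemma concatTo_zero {k : ℕ} (b : Fin k → List Bool) (h : 0 < k) :
    concatTo b ⟨0, h⟩ = b ⟨0, h⟩ := by
  have h0 : 0 < (List.finRange k).length := by simpa using h
  simp [concatTo, List.take_add_one, List.getElem?_eq_getElem h0, List.getElem_finRange]

lemma concatTo_succ {k : ℕ} (b : Fin k → List Bool) (j : ℕ) (h : j + 1 < k) :
    concatTo b ⟨j + 1, h⟩ = concatTo b ⟨j, by omega⟩ ++ b ⟨j + 1, h⟩ := by
  have h0 : j + 1 < (List.finRange k).length := by simpa using h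
  simp [concatTo, List.take_add_one, List.getElem?_eq_getElem h0, List.getElem_finRange]

lemma concatTo_prefix_of_le {k : ℕ} (b : Fin k → List Bool) {i j : Fin k} (hij : i ≤ j) :
    concatTo b i <+: concatTo b j :=
  ((List.take_prefix_take_left (Nat.succ_le_succ hij)).map b).flatten

lemma exists_concatTo_eq {k : ℕ} (c : Fin k → List Bool)
    (hc : ∀ i j, i ≤ j → c i <+: c j) : ∃ b, ∀ j, concatTo b j = c j := by
  let b : Fin k → List Bool
    | ⟨0, h⟩ => c ⟨0, h⟩
    | ⟨j + 1, h⟩ => (c ⟨j + 1, h⟩).drop (c ⟨j, by omega⟩).length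
  suffices ∀ j (h : j < k), concatTo b ⟨j, h⟩ = c ⟨j, h⟩ from
    ⟨b, fun j => this j.1 j.2⟩
  intro j h
  induction j with
  | zero => exact concatTo_zero b h
  | succ j ih =>
    rw [concatTo_succ, ih]
    exact List.prefix_iff_eq_append.1 (hc _ _ (Fin.mk_le_mk.2 j.le_succ))

lemma exists_CP_chain_of_mem_inter {n k t : ℕ} {α β : Fin k → ℕ} (ht1 : 1 ≤ t)
    (ht2 : t ≤ 2 ^ n) (ht : ∀ i, t ∈ Finset.Icc (α i) (β i)) :
    ∃ σ : Equiv.Perm (Fin k), ∃ b : Fin k → List Bool,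
      ∀ j, concatTo b j ∈ CP n (α (σ j)) (β (σ j)) := by
  obtain ⟨leaf, hlen, hval⟩ := exists_bitsVal_eq n (t - 1) (by omega)
  have hleaf : seg n leaf = {t} := by rw [seg_of_length_eq hlen, hval, Nat.sub_add_cancel ht1]
  choose J hJ using fun i =>
    exists_take_mem_CP hlen.le (hleaf ▸ Finset.singleton_subset_iff.2 (ht i))
  obtain ⟨b, hb⟩ := exists_concatTo_eq (fun j => leaf.take (J (Tuple.sort J j)))
    fun i j hij => List.take_prefix_take_left (Tuple.monotone_sort J hij)
  exact ⟨Tuple.sort J, b, fun j => hb j ▸ hJ _⟩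

lemma exists_mem_inter_of_CP_chain {n k : ℕ} {α β : Fin k → ℕ} {σ : Equiv.Perm (Fin k)}
    {b : Fin k → List Bool} (hb : ∀ j, concatTo b j ∈ CP n (α (σ j)) (β (σ j))) :
    ∃ t, ∀ i, t ∈ Finset.Icc (α i) (β i) := by
  obtain _ | k := k
  · exact ⟨0, fun i => i.elim0⟩
  obtain ⟨t, ht⟩ := seg_nonempty n (concatTo b (Fin.last k))
  refine ⟨t, fun i => ?_⟩
  obtain ⟨-, hsub, -⟩ := hb (σ.symm i)
  rw [Equiv.apply_symm_apply] at hsub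
  exact hsub (seg_subset_of_prefix (concatTo_prefix_of_le b (Fin.le_last _)) (hb _).1 ht)

theorem stmt_8_general (n k : ℕ) (α β : Fin k → ℕ)
    (hα : ∀ i, 1 ≤ α i) (hβ : ∀ i, β i ≤ 2 ^ n) :
    (∃ t : ℕ, ∀ i, t ∈ Finset.Icc (α i) (β i)) ↔
    (∃ σ : Equiv.Perm (Fin k), ∃ b : Fin k → List Bool,
      ∀ j : Fin k, concatTo b j ∈ CP n (α (σ j)) (β (σ j))) := by
  refine ⟨fun ⟨t, ht⟩ => ?_, fun ⟨_, _, hb⟩ => exists_mem_inter_of_CP_chain hb⟩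
  rcases isEmpty_or_nonempty (Fin k) with _ | ⟨⟨i⟩⟩
  · exact ⟨1, fun _ => [], isEmptyElim⟩
  obtain ⟨hαt, htβ⟩ := Finset.mem_Icc.1 (ht i)
  exact exists_CP_chain_of_mem_inter ((hα i).trans hαt) (htβ.trans (hβ i)) ht

/-- **Interval intersection via canonical partitions** (Lemma on segment
trees): discrete intervals `[α i, β i] ⊆ [1, 2^n]`, `i ∈ [k]`, have a nonempty
common intersection iff there are a permutation `σ` of `[k]` and bitstrings
`b 1, …, b k` such that for every `j`, the concatenation `b 1 ∘ ⋯ ∘ b j`,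
viewed as a node of the segment tree `𝒯_{2^n}`, belongs to the canonical
partition `CP_N([α (σ j), β (σ j)])`. -/
theorem stmt_8 (n k : ℕ) (α β : Fin k → ℕ)
    (hα : ∀ i, 1 ≤ α i) (hαβ : ∀ i, α i ≤ β i) (hβ : ∀ i, β i ≤ 2 ^ n) :
    (∃ t : ℕ, ∀ i, t ∈ Finset.Icc (α i) (β i)) ↔
    (∃ σ : Equiv.Perm (Fin k), ∃ b : Fin k → List Bool,
      ∀ j : Fin k, concatTo b j ∈ CP n (α (σ j)) (β (σ j))) :=
  stmt_8_general n k α β hα hβ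
end

section
/- If a full conjunctive query $Q$ is hierarchical, then for every permutation $\sigma$ of its $k$ atoms, the component $\widehat Q_\sigma$ of its multivariate extension is $\alpha$-acyclic (admits a join tree). -/
/-!
Order the atoms of `Q̂_σ` by position and give every atom `i` that is not the last one a parent
`q i > i` that contains every variable of atom `i` occurring in some later atom. Such a parent
exists because the variables of atom `i` have pairwise nested atom sets (the query is
hierarchical), so the variable with the smallest atom set among those occurring later yields it.
The edges `i — q i` form a tree, since every atom has at most one larger neighbour. The atoms
containing a variable `x` form a set that is closed under `q` below its maximum, and so do the
atoms containing `Z_j`, which are those from position `j` on; climbing along `q` then connects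
each of these sets inside the tree.
-/

/-- A query (hypergraph of `k` atom schemas) is α-acyclic iff it has a join
tree: a tree on the atoms such that for every variable the atoms containing it
induce a connected subtree. -/
def HasJoinTree {k : ℕ} {W : Type*} (X : Fin k → Finset W) : Prop :=
  ∃ G : SimpleGraph (Fin k), G.IsTree ∧
    ∀ w : W, (G.induce {i | w ∈ X i}).Preconnected

/-- The set `at(x)` of (indices of) atoms whose schema contains variable `x`. -/
def atomsOf {k : ℕ} {V : Type*} [DecidableEq V] (X : Fin k → Finset V) (x : V) :
    Finset (Fin k) :=
  Finset.univ.filter (fun i => x ∈ X i)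

/-- A query with atom schemas `X` is **hierarchical** if for every pair of
variables `x, y`, either `at(x) ⊆ at(y)`, or `at(y) ⊆ at(x)`, or
`at(x) ∩ at(y) = ∅`. -/
def Hierarchical {k : ℕ} {V : Type*} [DecidableEq V] (X : Fin k → Finset V) : Prop :=
  ∀ x y : V, atomsOf X x ⊆ atomsOf X y ∨ atomsOf X y ⊆ atomsOf X x ∨
    atomsOf X x ∩ atomsOf X y = ∅

/-- The atom schemas of the component `Q̂_σ` of the multivariate extension of
the query with atom schemas `X`: for a permutation `σ` of `[k]` and fresh
variables `Z_1, …, Z_k` (represented by `Sum.inr`), the `i`-th atom of `Q̂_σ`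
has schema `{Z_1, …, Z_i} ∪ X (σ i)`. -/
def hatSchema {k : ℕ} {V : Type*} [DecidableEq V]
    (X : Fin k → Finset V) (σ : Equiv.Perm (Fin k)) (i : Fin k) :
    Finset (V ⊕ Fin k) :=
  (X (σ i)).image Sum.inl ∪
    (Finset.univ.filter (fun j : Fin k => j ≤ i)).image Sum.inr

namespace SimpleGraph

variable {α : Type*} [LinearOrder α]

/-- Acyclic because the least vertex of a cycle has two distinct neighbours on it, both larger. -/
theorem isAcyclic_of_unique_adj_gt {G : SimpleGraph α}
    (h : ∀ a b c, G.Adj a b → G.Adj a c → a < b → a < c → b = c) : G.IsAcyclic := by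
  intro v c hc
  obtain ⟨m, hm, hmin⟩ := c.support.toFinset.exists_min_image id ⟨v, by simp⟩
  rw [List.mem_toFinset] at hm
  set c' := c.rotate m hm
  have hc' : c'.IsCycle := hc.rotate hm
  have hge : ∀ n, m ≤ c'.getVert n := fun n =>
    hmin _ (List.mem_toFinset.mpr ((c.mem_support_rotate_iff m hm).mp (c'.getVert_mem_support n)))
  have hsnd := c'.adj_snd hc'.not_nil
  have hpen := c'.adj_penultimate hc'.not_nil
  exact hc'.snd_ne_penultimate <| h _ _ _ hsnd hpen.symm
    ((hge 1).lt_of_ne hsnd.ne) ((hge _).lt_of_ne hpen.ne.symm)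

/-- Every vertex reaches a greatest one by climbing. -/
theorem preconnected_of_exists_adj_gt [WellFoundedGT α] {G : SimpleGraph α}
    (h : ∀ i j, i < j → ∃ k, i < k ∧ G.Adj i k) : G.Preconnected := by
  intro u v
  obtain ⟨m, -, hm⟩ := wellFounded_gt.has_min Set.univ ⟨u, trivial⟩
  have reach : ∀ i, G.Reachable i m := fun i => by
    induction i using WellFoundedGT.induction with
    | _ i ih =>
      rcases (not_lt.mp (hm i trivial)).lt_or_eq with hlt | rfl
      · obtain ⟨k, hik, hadj⟩ := h i m hlt
        exact hadj.reachable.trans (ih k hik)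
      · rfl
  exact (reach u).trans (reach v).symm

variable (q : α → α)

def parentGraph : SimpleGraph α := fromRel fun a b => b = q a

variable {q}

theorem parentGraph_adj_of_lt {i : α} (h : i < q i) : (parentGraph q).Adj i (q i) :=
  (fromRel_adj _ _ _).mpr ⟨h.ne, Or.inl rfl⟩

theorem parentGraph_isAcyclic (hle : ∀ i, i ≤ q i) : (parentGraph q).IsAcyclic := by
  have hup : ∀ a b, (parentGraph q).Adj a b → a < b → b = q a := by
    intro a b hab hlt
    rcases ((fromRel_adj _ _ _).mp hab).2 with h | h
    · exact h
    · exact absurd (h ▸ hle b) hlt.not_ge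
  exact isAcyclic_of_unique_adj_gt fun a b c hb hc hab hac =>
    (hup a b hb hab).trans (hup a c hc hac).symm

variable [WellFoundedGT α]

theorem parentGraph_induce_preconnected (hlt : ∀ i j, i < j → i < q i) {s : Set α}
    (hs : ∀ i ∈ s, ∀ j ∈ s, i < j → q i ∈ s) : ((parentGraph q).induce s).Preconnected :=
  preconnected_of_exists_adj_gt fun ⟨i, hi⟩ ⟨j, hj⟩ hij =>
    ⟨⟨q i, hs i hi j hj hij⟩, hlt i j hij, parentGraph_adj_of_lt (hlt i j hij)⟩

theorem parentGraph_isTree [Nonempty α] (hle : ∀ i, i ≤ q i) (hlt : ∀ i j, i < j → i < q i) :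
    (parentGraph q).IsTree :=
  ⟨⟨preconnected_of_exists_adj_gt fun i j hij =>
      ⟨q i, hlt i j hij, parentGraph_adj_of_lt (hlt i j hij)⟩⟩,
    parentGraph_isAcyclic hle⟩

end SimpleGraph

open SimpleGraph

theorem Finset.exists_forall_subset_of_total {ι V : Type*} (A : V → Finset ι) {C : V → Prop}
    (hC : ∃ x, C x) (htotal : ∀ x y, C x → C y → A x ⊆ A y ∨ A y ⊆ A x) :
    ∃ x₀, C x₀ ∧ ∀ y, C y → A x₀ ⊆ A y := by
  obtain ⟨x₀, hx₀, hmin⟩ := (measure fun x => (A x).card).wf.has_min {x | C x} hC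
  refine ⟨x₀, hx₀, fun y hy => (htotal x₀ y hx₀ hy).elim id fun hyx => ?_⟩
  exact (Finset.eq_of_subset_of_card_le hyx (not_lt.mp (hmin y hy))).ge

section Hierarchical

variable {k : ℕ} {V : Type*} [DecidableEq V] {X : Fin k → Finset V}

theorem atomsOf_comp_perm (σ : Equiv.Perm (Fin k)) (x : V) :
    atomsOf (X ∘ σ) x = (atomsOf X x).map σ.symm.toEmbedding := by
  ext i
  simp [atomsOf]

theorem Hierarchical.comp_perm (hQ : Hierarchical X) (σ : Equiv.Perm (Fin k)) :
    Hierarchical (X ∘ σ) := by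
  intro x y
  simp only [atomsOf_comp_perm, Finset.map_subset_map, ← Finset.map_inter, Finset.map_eq_empty]
  exact hQ x y

theorem Hierarchical.subset_or_subset_of_mem (hQ : Hierarchical X) {i : Fin k} {x y : V}
    (hx : x ∈ X i) (hy : y ∈ X i) :
    atomsOf X x ⊆ atomsOf X y ∨ atomsOf X y ⊆ atomsOf X x := by
  have hi : i ∈ atomsOf X x ∩ atomsOf X y := by simp [atomsOf, hx, hy]
  exact (hQ x y).imp_right (Or.resolve_right · fun h => by simp [h] at hi)

theorem Hierarchical.exists_parent (hQ : Hierarchical X) (i : Fin k) :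
    ∃ q, i ≤ q ∧ (∀ j, i < j → i < q) ∧ ∀ x ∈ X i, ∀ m, i < m → x ∈ X m → x ∈ X q := by
  by_cases hlater : ∃ x ∈ X i, ∃ m, i < m ∧ x ∈ X m
  · obtain ⟨x₀, ⟨-, m, him, hx₀m⟩, hmin⟩ := Finset.exists_forall_subset_of_total (atomsOf X)
      hlater fun x y hx hy => hQ.subset_or_subset_of_mem hx.1 hy.1
    refine ⟨m, him.le, fun _ _ => him, fun y hyi m' him' hym' => ?_⟩
    have hm : m ∈ atomsOf X x₀ := by simp [atomsOf, hx₀m]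
    simpa [atomsOf] using hmin y ⟨hyi, m', him', hym'⟩ hm
  · push Not at hlater
    by_cases htop : ∃ j, i < j
    · obtain ⟨j, hij⟩ := htop
      exact ⟨j, hij.le, fun _ _ => hij, fun x hx m him hxm => absurd hxm (hlater x hx m him)⟩
    · exact ⟨i, le_rfl, fun j hij => (htop ⟨j, hij⟩).elim,
        fun x hx m him hxm => absurd hxm (hlater x hx m him)⟩

end Hierarchical

@[simp]
theorem inl_mem_hatSchema {k : ℕ} {V : Type*} [DecidableEq V] {X : Fin k → Finset V}
    {σ : Equiv.Perm (Fin k)} {i : Fin k} {x : V} :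
    Sum.inl x ∈ hatSchema X σ i ↔ x ∈ X (σ i) := by
  simp [hatSchema]

@[simp]
theorem inr_mem_hatSchema {k : ℕ} {V : Type*} [DecidableEq V] {X : Fin k → Finset V}
    {σ : Equiv.Perm (Fin k)} {i j : Fin k} : Sum.inr j ∈ hatSchema X σ i ↔ j ≤ i := by
  simp [hatSchema]

/-- **Hierarchical queries have acyclic multivariate extensions**: if the query
`Q` with `k ≥ 1` atom schemas `X` is hierarchical, then for every permutation
`σ` of the atoms, the component `Q̂_σ` of its multivariate extension is
α-acyclic (admits a join tree). -/
theorem stmt_10 {k : ℕ} {V : Type*} [DecidableEq V] (hk : 1 ≤ k)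
    (X : Fin k → Finset V) (hQ : Hierarchical X) (σ : Equiv.Perm (Fin k)) :
    HasJoinTree (hatSchema X σ) := by
  choose q hle hlt hclosed using (hQ.comp_perm σ).exists_parent
  have : Nonempty (Fin k) := ⟨⟨0, hk⟩⟩
  refine ⟨parentGraph q, parentGraph_isTree hle hlt, ?_⟩
  rintro (x | j)
  · refine parentGraph_induce_preconnected hlt fun i hi m hm him => ?_
    simp only [Set.mem_ofPred_eq, inl_mem_hatSchema] at hi hm ⊢
    exact hclosed i x hi m him hm
  · refine parentGraph_induce_preconnected hlt fun i hi m _ him => ?_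
    simp only [Set.mem_ofPred_eq, inr_mem_hatSchema] at hi ⊢
    exact hi.trans (hlt i m him).le
end
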